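/- Continuity of the constrained divergence minimum in the marginal constraint: let Q be a strictly positive pmf on X × Y and R a pmf on Y. Then lim_{μ → 0} min_{π : π_X ∈ φ, ‖π_Y − R‖_∞ ≤ μ} D(π ‖ Q) = min_{π : π_X ∈ φ, π_Y = R} D(π ‖ Q), for any closed nonempty set φ ⊆ P(X) for which the limiting feasible set is nonempty. -/

import Mathlib

open scoped BigOperators

noncomputable section
open Classical

/-- A probability mass function on a finite alphabet. -/
def IsPMF {Z : Type*} [Fintype Z] (p : Z → ℝ) : Prop :=
  (∀ z, 0 ≤ p z) ∧ ∑ z, p z = 1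

/-- First marginal of a joint pmf. -/
def margX {X Y : Type*} [Fintype X] [Fintype Y] (p : X × Y → ℝ) : X → ℝ :=
  fun x => ∑ y, p (x, y)

/-- Second marginal of a joint pmf. -/
def margY {X Y : Type*} [Fintype X] [Fintype Y] (p : X × Y → ℝ) : Y → ℝ :=
  fun y => ∑ x, p (x, y)

/-- Empirical type (empirical distribution) of a sequence. -/
def tp {X : Type*} [Fintype X] [DecidableEq X] {n : ℕ} (xs : Fin n → X) : X → ℝ :=
  fun a => ((Finset.univ.filter (fun t => xs t = a)).card : ℝ) / n

/-- The μ-typical set: sequences whose type is within μ of P in sup norm. -/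
def typical {X : Type*} [Fintype X] [DecidableEq X] (μ : ℝ) (P : X → ℝ) (n : ℕ) :
    Set (Fin n → X) :=
  {xs | ∀ a, |tp xs a - P a| ≤ μ}

/-- Probability of a set of sequences under the n-fold product of pmf p. -/
def prodProb {X : Type*} [Fintype X] {n : ℕ} (p : X → ℝ) (A : Set (Fin n → X)) : ℝ :=
  ∑ xs : Fin n → X, A.indicator (fun xs => ∏ t, p (xs t)) xs

/-- Probability of a set under a pmf on a finite alphabet. -/
def probOf {S : Type*} [Fintype S] (P : S → ℝ) (A : Set S) : ℝ :=
  ∑ s, A.indicator P s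

/-- Kullback–Leibler divergence (real-valued formula, conventions 0 log 0 = 0). -/
def KLr {Z : Type*} [Fintype Z] (p q : Z → ℝ) : ℝ :=
  ∑ z, p z * Real.log (p z / q z)

/-- Absolute continuity of pmfs on a finite alphabet. -/
def AbsCont {Z : Type*} (p q : Z → ℝ) : Prop := ∀ z, q z = 0 → p z = 0

/-- Extended-real-valued KL divergence: +∞ when p is not absolutely continuous w.r.t. q. -/
def KLe {Z : Type*} [Fintype Z] (p q : Z → ℝ) : EReal :=
  if AbsCont p q then ((KLr p q : ℝ) : EReal) else ⊤

/-- Continuity of the constrained divergence minimum in the marginal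
constraint: as μ → 0⁺ the minimum over {π : π_X ∈ φ, ‖π_Y − R‖_∞ ≤ μ} of D(π‖Q)
converges to the minimum over {π : π_X ∈ φ, π_Y = R}. -/
theorem stmt16 {X Y : Type*} [Fintype X] [Fintype Y]
    (Q : X × Y → ℝ) (hQ : IsPMF Q) (hQpos : ∀ z, 0 < Q z)
    (R : Y → ℝ) (hR : IsPMF R)
    (φ : Set (X → ℝ)) (hφclosed : IsClosed φ) (hφpmf : φ ⊆ {p : X → ℝ | IsPMF p})
    (hfeas : {π : X × Y → ℝ | IsPMF π ∧ margX π ∈ φ ∧ margY π = R}.Nonempty) :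
    Filter.Tendsto
      (fun μ : ℝ => sInf {d : ℝ | ∃ π : X × Y → ℝ, IsPMF π ∧ margX π ∈ φ ∧
          (∀ y, |margY π y - R y| ≤ μ) ∧ d = KLr π Q})
      (nhdsWithin 0 (Set.Ioi 0))
      (nhds (sInf {d : ℝ | ∃ π : X × Y → ℝ, IsPMF π ∧ margX π ∈ φ ∧
          margY π = R ∧ d = KLr π Q})) := by
  classical
  -- the continuous surrogate for KLr
  set F : (X × Y → ℝ) → ℝ :=
    fun π => ∑ z, (π z * Real.log (π z) - π z * Real.log (Q z)) with hFdef
  have hFcont : Continuous F := by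
    apply continuous_finset_sum
    intro z _
    exact (Real.continuous_mul_log.comp (continuous_apply z)).sub
      ((continuous_apply z).mul continuous_const)
  have hKL : ∀ π : X × Y → ℝ, (∀ z, 0 ≤ π z) → KLr π Q = F π := by
    intro π hπ
    unfold KLr
    rw [hFdef]
    apply Finset.sum_congr rfl
    intro z _
    rcases eq_or_lt_of_le (hπ z) with h | h
    · simp [← h]
    · rw [Real.log_div h.ne' (hQpos z).ne', mul_sub]
  -- the constraint sets
  set K : ℝ → Set (X × Y → ℝ) :=
    fun μ => {π | IsPMF π ∧ margX π ∈ φ ∧ ∀ y, |margY π y - R y| ≤ μ} with hKdef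
  have hKsub : ∀ {μ μ' : ℝ}, μ ≤ μ' → K μ ⊆ K μ' := by
    rintro μ μ' h π ⟨h1, h2, h3⟩
    exact ⟨h1, h2, fun y => (h3 y).trans h⟩
  -- compactness of pmfs
  have hPcl : IsClosed {π : X × Y → ℝ | IsPMF π} := by
    have : {π : X × Y → ℝ | IsPMF π} =
        (⋂ z, {π : X × Y → ℝ | 0 ≤ π z}) ∩ {π | ∑ z, π z = 1} := by
      ext π; simp [IsPMF, Set.mem_iInter]
    rw [this]
    exact IsClosed.inter
      (isClosed_iInter fun z => isClosed_le continuous_const (continuous_apply z))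
      (isClosed_eq (continuous_finset_sum _ fun z _ => continuous_apply z) continuous_const)
  have hPcomp : IsCompact {π : X × Y → ℝ | IsPMF π} := by
    apply IsCompact.of_isClosed_subset (isCompact_univ_pi fun _ => isCompact_Icc) hPcl
    rintro π ⟨h0, h1⟩ z _
    refine ⟨h0 z, ?_⟩
    calc π z ≤ ∑ w, π w := Finset.single_le_sum (fun w _ => h0 w) (Finset.mem_univ z)
    _ = 1 := h1
  -- continuity of marginals
  have hmX : Continuous (margX : (X × Y → ℝ) → X → ℝ) := by
    unfold margX
    exact continuous_pi fun x => continuous_finset_sum _ fun y _ => continuous_apply (x, y)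
  have hmY : ∀ y : Y, Continuous fun π : X × Y → ℝ => margY π y := by
    intro y
    unfold margY
    exact continuous_finset_sum _ fun x _ => continuous_apply (x, y)
  -- K μ is compact
  have hKcl : ∀ μ : ℝ, IsClosed (K μ) := by
    intro μ
    have : K μ = {π : X × Y → ℝ | IsPMF π} ∩ (margX ⁻¹' φ ∩ ⋂ y, {π | |margY π y - R y| ≤ μ}) := by
      ext π; simp [hKdef, Set.mem_iInter]
    rw [this]
    refine hPcl.inter (IsClosed.inter (hφclosed.preimage hmX) (isClosed_iInter fun y => ?_))
    exact isClosed_le (continuous_abs.comp ((hmY y).sub continuous_const)) continuous_const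
  have hKcomp : ∀ μ : ℝ, IsCompact (K μ) :=
    fun μ => IsCompact.of_isClosed_subset hPcomp (hKcl μ) (fun π h => h.1)
  -- nonemptiness
  have hK0ne : (K 0).Nonempty := by
    obtain ⟨π₀, h1, h2, h3⟩ := hfeas
    exact ⟨π₀, h1, h2, fun y => by rw [h3]; simp⟩
  have hKne : ∀ μ : ℝ, 0 ≤ μ → (K μ).Nonempty := fun μ hμ => hK0ne.mono (hKsub hμ)
  have hbdd : ∀ μ : ℝ, BddBelow (F '' K μ) := fun μ => ((hKcomp μ).image hFcont).bddBelow
  set L : ℝ := sInf (F '' K 0) with hLdef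
  have hmono : ∀ μ : ℝ, 0 ≤ μ → sInf (F '' K μ) ≤ L :=
    fun μ hμ => csInf_le_csInf (hbdd μ) (hK0ne.image F) (Set.image_mono (f := F) (hKsub hμ))
  -- key lower-semicontinuity claim
  have key : ∀ ε : ℝ, 0 < ε → ∃ δ : ℝ, 0 < δ ∧
      ∀ μ : ℝ, 0 < μ → μ ≤ δ → L - ε ≤ sInf (F '' K μ) := by
    by_contra hcon
    push_neg at hcon
    obtain ⟨ε, hε, hδ⟩ := hcon
    have hseq : ∀ n : ℕ, ∃ μ : ℝ, 0 < μ ∧ μ ≤ 1 / (n + 1) ∧ sInf (F '' K μ) < L - ε :=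
      fun n => hδ (1 / (n + 1)) (by positivity)
    choose μf hμpos hμle hμlt using hseq
    have hπn : ∀ n : ℕ, ∃ π, π ∈ K (μf n) ∧ F π < L - ε := by
      intro n
      obtain ⟨d, hd, hdlt⟩ := exists_lt_of_csInf_lt
        ((hKne (μf n) (hμpos n).le).image F) (hμlt n)
      obtain ⟨π, hπ, rfl⟩ := hd
      exact ⟨π, hπ, hdlt⟩
    choose π hπK hπF using hπn
    have hle1 : ∀ n : ℕ, μf n ≤ 1 := fun n => (hμle n).trans (by
      rw [div_le_one (by positivity)]; linarith [Nat.cast_nonneg (α := ℝ) n])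
    have hπK1 : ∀ n : ℕ, π n ∈ K 1 := fun n => hKsub (hle1 n) (hπK n)
    obtain ⟨π₁, hπ₁mem, σ, hσ, hlim⟩ := (hKcomp 1).tendsto_subseq hπK1
    -- margY π₁ = R
    have hmargY : margY π₁ = R := by
      funext y
      have hb : ∀ k : ℕ, |margY (π (σ k)) y - R y| ≤ 1 / (σ k + 1) :=
        fun k => ((hπK (σ k)).2.2 y).trans (hμle (σ k))
      have h0 : Filter.Tendsto (fun k : ℕ => |margY (π (σ k)) y - R y|)
          Filter.atTop (nhds 0) := by
        apply squeeze_zero (fun k => abs_nonneg _) hb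
        exact tendsto_one_div_add_atTop_nhds_zero_nat.comp hσ.tendsto_atTop
      have h1 : Filter.Tendsto (fun k : ℕ => |margY (π (σ k)) y - R y|)
          Filter.atTop (nhds (|margY π₁ y - R y|)) := by
        have hc : Continuous fun ρ : X × Y → ℝ => |margY ρ y - R y| :=
          continuous_abs.comp ((hmY y).sub continuous_const)
        exact (hc.tendsto π₁).comp hlim
      have := tendsto_nhds_unique h1 h0
      rw [abs_eq_zero, sub_eq_zero] at this
      exact this
    have hmem0 : π₁ ∈ K 0 :=
      ⟨hπ₁mem.1, hπ₁mem.2.1, fun y => by rw [hmargY]; simp⟩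
    have hFle : F π₁ ≤ L - ε := by
      apply le_of_tendsto ((hFcont.tendsto π₁).comp hlim)
      exact Filter.Eventually.of_forall fun k => (hπF (σ k)).le
    have hLle : L ≤ F π₁ := csInf_le (hbdd 0) ⟨π₁, hmem0, rfl⟩
    linarith
  -- rewrite the goal in terms of F and K
  have hSeq : ∀ μ : ℝ, {d : ℝ | ∃ π : X × Y → ℝ, IsPMF π ∧ margX π ∈ φ ∧
      (∀ y, |margY π y - R y| ≤ μ) ∧ d = KLr π Q} = F '' K μ := by
    intro μ
    ext d
    constructor
    · rintro ⟨p, h1, h2, h3, rfl⟩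
      exact ⟨p, ⟨h1, h2, h3⟩, (hKL p h1.1).symm⟩
    · rintro ⟨p, ⟨h1, h2, h3⟩, rfl⟩
      exact ⟨p, h1, h2, h3, (hKL p h1.1).symm⟩
  have hTeq : {d : ℝ | ∃ π : X × Y → ℝ, IsPMF π ∧ margX π ∈ φ ∧
      margY π = R ∧ d = KLr π Q} = F '' K 0 := by
    ext d
    constructor
    · rintro ⟨p, h1, h2, h3, rfl⟩
      exact ⟨p, ⟨h1, h2, fun y => by rw [h3]; simp⟩, (hKL p h1.1).symm⟩
    · rintro ⟨p, ⟨h1, h2, h3⟩, rfl⟩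
      refine ⟨p, h1, h2, ?_, (hKL p h1.1).symm⟩
      funext y
      have := le_antisymm (h3 y) (abs_nonneg _)
      rw [abs_eq_zero, sub_eq_zero] at this
      exact this
  simp only [hSeq, hTeq]
  rw [Metric.tendsto_nhdsWithin_nhds]
  intro ε hε
  obtain ⟨δ, hδpos, hδ⟩ := key (ε / 2) (by linarith)
  refine ⟨δ, hδpos, fun μ hμ hdist => ?_⟩
  have hμpos : 0 < μ := hμ
  have hμδ : μ ≤ δ := by
    rw [Real.dist_eq, sub_zero, abs_of_pos hμpos] at hdist
    exact hdist.le
  have hlow := hδ μ hμpos hμδ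
  have hup := hmono μ hμpos.le
  rw [Real.dist_eq, abs_lt]
  constructor <;> linarith
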